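/- arXiv:0912.3016 — 8 statements merged into one kernel-verified Lean document; each statement's English description precedes it below -/
import Mathlib

section
/- For every n-tuple P of nonempty sites in a metric space, there exist n-tuples R and S of subsets with R = Dom S and S = Dom R, and moreover for any n-tuples R', S' satisfying R' = Dom S' and S' = Dom R', we have R ⪯ R' ⪯ S and R ⪯ S' ⪯ S. In particular R ⪯ S. -/
open EMetric Set

/-- The dominance region of `A` over `B`. -/
def dom {X : Type*} [MetricSpace X] (A B : Set X) : Set X :=
  {x | infEdist x A ≤ infEdist x B}

/-- The operator `Dom` relative to the tuple of sites `P`. -/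
def Dom {X : Type*} [MetricSpace X] {n : ℕ} (P R : Fin n → Set X) : Fin n → Set X :=
  fun i => dom (P i) (⋃ j, ⋃ (_ : j ≠ i), R j)

lemma Dom_anti {X : Type*} [MetricSpace X] {n : ℕ} (P : Fin n → Set X)
    {R S : Fin n → Set X} (h : R ≤ S) : Dom P S ≤ Dom P R := by
  intro i x hx
  refine le_trans hx (infEdist_anti ?_)
  exact Set.iUnion_mono fun j => Set.iUnion_mono fun hj => h j

/-- Existence of a least/greatest pair of "double zone diagrams". -/
theorem exists_double_zone_diagram {X : Type*} [MetricSpace X] {n : ℕ}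
    (P : Fin n → Set X) (hP : ∀ i, (P i).Nonempty) :
    ∃ R S : Fin n → Set X,
      R = Dom P S ∧ S = Dom P R ∧
      (∀ R' S' : Fin n → Set X, R' = Dom P S' → S' = Dom P R' →
        (∀ i, R i ⊆ R' i) ∧ (∀ i, R' i ⊆ S i) ∧
        (∀ i, R i ⊆ S' i) ∧ (∀ i, S' i ⊆ S i)) ∧
      (∀ i, R i ⊆ S i) := by
  set F : (Fin n → Set X) →o (Fin n → Set X) :=
    ⟨fun R => Dom P (Dom P R), fun R S h => Dom_anti P (Dom_anti P h)⟩ with hF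
  set R : Fin n → Set X := OrderHom.lfp F with hR
  set S : Fin n → Set X := Dom P R with hS
  have hfix : F R = R := OrderHom.map_lfp F
  have hRS : R = Dom P S := by rw [hS]; exact hfix.symm
  have key : ∀ R' S' : Fin n → Set X, R' = Dom P S' → S' = Dom P R' →
      (∀ i, R i ⊆ R' i) ∧ (∀ i, R' i ⊆ S i) ∧
      (∀ i, R i ⊆ S' i) ∧ (∀ i, S' i ⊆ S i) := by
    intro R' S' h1 h2
    have hR' : F R' = R' := by
      show Dom P (Dom P R') = R'
      rw [← h2, ← h1]
    have hS' : F S' = S' := by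
      show Dom P (Dom P S') = S'
      rw [← h1, ← h2]
    have hRR' : R ≤ R' := OrderHom.lfp_le_fixed F hR'
    have hRS' : R ≤ S' := OrderHom.lfp_le_fixed F hS'
    have hS'S : S' ≤ S := by rw [h2, hS]; exact Dom_anti P hRR'
    have hR'S : R' ≤ S := by rw [h1, hS]; exact Dom_anti P hRS'
    exact ⟨hRR', hR'S, hRS', hS'S⟩
  refine ⟨R, S, hRS, hS, key, ?_⟩
  exact (key S R hS hRS).1
end

section
/- Let P = (P_1,...,P_n) be sites in a metric space with ε := min_{i≠j} dist(P_i,P_j) > 0, and suppose R = Dom S and S = Dom R. Then for each i, dist(P_i, ∪_{j≠i} S_j) ≥ ε/2, and consequently the ε/4-neighborhood of P_i is contained in R_i. -/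
open EMetric Set

/-!
Every site lies in its own dominance region, so `P i ⊆ R i`. A point `x ∈ S j` is no farther
from `P j` than from `p ∈ P i ⊆ ⋃_{k ≠ j} R k`, hence
`ε ≤ d(p, P j) ≤ d(x, P j) + d(p, x) ≤ 2 d(p, x)`. Consequently every point of `⋃_{j ≠ i} S j`
is at distance at least `ε/2` from `P i`, and a point within `ε/4` of `P i` is then at least
`ε/4` away from `⋃_{j ≠ i} S j`, so it lies in `dom (P i) (⋃_{j ≠ i} S j) = R i`.
-/

open Metric

theorem ofReal_le_infEDist {X : Type*} [MetricSpace X] {A : Set X} {x : X} {δ : ℝ}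
    (h : ∀ a ∈ A, δ ≤ dist x a) : ENNReal.ofReal δ ≤ infEDist x A :=
  le_infEDist.2 fun a ha => by rw [edist_dist]; exact ENNReal.ofReal_le_ofReal (h a ha)

section dom

variable {X : Type*} [MetricSpace X] {A B : Set X} {x p : X}

theorem mem_dom_iff : x ∈ dom A B ↔ infEDist x A ≤ infEDist x B := Iff.rfl

theorem subset_dom : A ⊆ dom A B := fun _ hx => by
  simp [mem_dom_iff, infEDist_zero_of_mem hx]

theorem infEDist_le_two_mul_edist_of_mem_dom (hx : x ∈ dom A B) (hp : p ∈ B) :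
    infEDist p A ≤ 2 * edist p x :=
  calc infEDist p A ≤ infEDist x A + edist p x := infEDist_le_infEDist_add_edist
    _ ≤ edist x p + edist p x :=
      add_le_add_left ((mem_dom_iff.1 hx).trans (infEDist_le_edist_of_mem hp)) _
    _ = 2 * edist p x := by rw [edist_comm, two_mul]

theorem mem_dom_of_infEDist_le {r : ENNReal} (hr : r ≠ ⊤) (hB : ∀ y ∈ B, 2 * r ≤ infEDist y A)
    (hx : infEDist x A ≤ r) : x ∈ dom A B := by
  refine mem_dom_iff.2 (le_infEDist.2 fun y hy => hx.trans ?_)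
  refine (ENNReal.add_le_add_iff_left hr).1 ?_
  calc r + r = 2 * r := (two_mul r).symm
    _ ≤ infEDist y A := hB y hy
    _ ≤ infEDist x A + edist y x := infEDist_le_infEDist_add_edist
    _ ≤ r + edist x y := by rw [edist_comm]; gcongr

theorem half_le_dist_of_mem_dom {ε : ℝ} (hx : x ∈ dom A B) (hp : p ∈ B)
    (hsep : ∀ q ∈ A, ε ≤ dist p q) : ε / 2 ≤ dist p x := by
  have : ENNReal.ofReal ε ≤ ENNReal.ofReal (2 * dist p x) := by
    rw [ENNReal.ofReal_mul zero_le_two, ENNReal.ofReal_ofNat, ← edist_dist]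
    exact (ofReal_le_infEDist hsep).trans (infEDist_le_two_mul_edist_of_mem_dom hx hp)
  linarith [(ENNReal.ofReal_le_ofReal_iff (by positivity)).1 this]

end dom

theorem eps_quarter_ball_general {X : Type*} [MetricSpace X] {n : ℕ}
    (P R S : Fin n → Set X)
    (ε : ℝ)
    (hsep : ∀ i j, i ≠ j → ∀ p ∈ P i, ∀ q ∈ P j, ε ≤ dist p q)
    (hR : R = Dom P S) (hS : S = Dom P R) :
    (∀ i, ∀ p ∈ P i, ∀ x ∈ ⋃ j, ⋃ (_ : j ≠ i), S j, ε / 2 ≤ dist p x) ∧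
    (∀ i, ∀ x : X, infEdist x (P i) ≤ ENNReal.ofReal (ε / 4) → x ∈ R i) := by
  have half_le : ∀ i, ∀ p ∈ P i, ∀ x ∈ ⋃ j, ⋃ (_ : j ≠ i), S j, ε / 2 ≤ dist p x := by
    intro i p hp x hx
    obtain ⟨j, hji, hxj⟩ := mem_iUnion₂.1 hx
    have hpR : p ∈ ⋃ k, ⋃ (_ : k ≠ j), R k :=
      mem_iUnion₂.2 ⟨i, Ne.symm hji, hR ▸ subset_dom hp⟩
    rw [hS] at hxj
    exact half_le_dist_of_mem_dom hxj hpR (hsep i j (Ne.symm hji) p hp)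
  refine ⟨half_le, fun i x hx => hR ▸ mem_dom_of_infEDist_le ENNReal.ofReal_ne_top ?_ hx⟩
  intro y hy
  rw [← ENNReal.ofReal_ofNat, ← ENNReal.ofReal_mul zero_le_two]
  exact ofReal_le_infEDist fun p hp => by
    rw [dist_comm]; linarith [half_le i p hp y hy]

/-- If the sites are pairwise at distance at least `ε > 0` and `R = Dom S`, `S = Dom R`,
then each `P i` is at distance at least `ε/2` from `⋃_{j ≠ i} S j`, and the
`ε/4`-neighborhood of `P i` is contained in `R i`. -/
theorem eps_quarter_ball {X : Type*} [MetricSpace X] {n : ℕ}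
    (P R S : Fin n → Set X) (hP : ∀ i, (P i).Nonempty)
    (ε : ℝ) (hε : 0 < ε)
    (hsep : ∀ i j, i ≠ j → ∀ p ∈ P i, ∀ q ∈ P j, ε ≤ dist p q)
    (hR : R = Dom P S) (hS : S = Dom P R) :
    (∀ i, ∀ p ∈ P i, ∀ x ∈ ⋃ j, ⋃ (_ : j ≠ i), S j, ε / 2 ≤ dist p x) ∧
    (∀ i, ∀ x : X, infEdist x (P i) ≤ ENNReal.ofReal (ε / 4) → x ∈ R i) :=
  eps_quarter_ball_general P R S ε hsep hR hS
end

section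
/- Let ‖·‖ be any norm on ℝ^d, let H ⊆ ℝ^d be a closed halfspace, and let p ∉ H. Then dom(p, H) = {x : ‖x−p‖ ≤ dist(x,H)} is convex, where dist is measured in the norm ‖·‖. -/
/-- In any finite-dimensional normed space (i.e. `ℝ^d` with an arbitrary norm), the
dominance region of a point over a closed halfspace not containing it is convex. -/
theorem dom_point_halfspace_convex (E : Type*) [NormedAddCommGroup E] [NormedSpace ℝ E]
    [FiniteDimensional ℝ E] (f : E →ₗ[ℝ] ℝ) (hf : f ≠ 0) (c : ℝ) (p : E)
    (hp : p ∉ {x : E | f x ≤ c}) :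
    Convex ℝ {x : E | dist x p ≤ Metric.infDist x {y : E | f y ≤ c}} := by
  classical
  set H : Set E := {y : E | f y ≤ c} with hH
  set g : E →L[ℝ] ℝ := LinearMap.toContinuousLinearMap f with hgdef
  have hgx : ∀ x, g x = f x := fun x => rfl
  have hg0 : g ≠ 0 := by
    intro h
    apply hf
    ext x
    have := congrArg (fun m : E →L[ℝ] ℝ => m x) h
    simpa [hgx] using this
  have hgpos : 0 < ‖g‖ := norm_pos_iff.mpr hg0
  -- E is nontrivial
  have hnt : Nontrivial E := by
    obtain ⟨x, hx⟩ : ∃ x, f x ≠ 0 := by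
      by_contra h
      push_neg at h
      exact hf (LinearMap.ext fun x => by simp [h x])
    exact ⟨x, 0, fun h => hx (by simp [h])⟩
  -- a norm-attaining unit vector
  obtain ⟨v, hv1, hgv⟩ : ∃ v : E, ‖v‖ = 1 ∧ g v = ‖g‖ := by
    have hsne : (Metric.sphere (0 : E) 1).Nonempty :=
      NormedSpace.sphere_nonempty.mpr zero_le_one
    obtain ⟨v, hvmem, hvmax⟩ :=
      (isCompact_sphere (0 : E) 1).exists_isMaxOn hsne g.continuous.continuousOn
    have hv1 : ‖v‖ = 1 := by simpa using hvmem
    have hnegv : -v ∈ Metric.sphere (0 : E) 1 := by simp [hv1]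
    have hge0 : 0 ≤ g v := by
      have h := hvmax hnegv
      simp only [Set.mem_setOf_eq, map_neg] at h
      linarith
    refine ⟨v, hv1, le_antisymm ?_ ?_⟩
    · calc g v ≤ |g v| := le_abs_self _
        _ = ‖g v‖ := rfl
        _ ≤ ‖g‖ * ‖v‖ := g.le_opNorm v
        _ = ‖g‖ := by rw [hv1, mul_one]
    · refine g.opNorm_le_bound hge0 fun x => ?_
      rcases eq_or_ne x 0 with rfl | hx
      · simp
      · have hxn : 0 < ‖x‖ := norm_pos_iff.mpr hx
        have hinv : 0 < ‖x‖⁻¹ := inv_pos.mpr hxn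
        have hu : (‖x‖⁻¹ • x) ∈ Metric.sphere (0 : E) 1 := by
          simp [norm_smul, abs_of_nonneg hinv.le, inv_mul_cancel₀ hxn.ne']
        have hu' : (-(‖x‖⁻¹ • x)) ∈ Metric.sphere (0 : E) 1 := by
          simp [norm_smul, abs_of_nonneg hinv.le, inv_mul_cancel₀ hxn.ne']
        have h1 := hvmax hu
        have h2 := hvmax hu'
        simp only [Set.mem_setOf_eq, map_smul, map_neg, smul_eq_mul] at h1 h2
        have hA := mul_le_mul_of_nonneg_left h1 hxn.le
        have hB := mul_le_mul_of_nonneg_left h2 hxn.le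
        have hcancel : ‖x‖ * (‖x‖⁻¹ * g x) = g x := by field_simp
        rw [hcancel] at hA
        rw [mul_neg, hcancel] at hB
        have habs : |g x| ≤ g v * ‖x‖ := by
          rw [abs_le]
          constructor <;> nlinarith
        calc ‖g x‖ = |g x| := rfl
          _ ≤ g v * ‖x‖ := habs
  -- H is nonempty
  have hHne : H.Nonempty := by
    refine ⟨p - ((f p - c) / ‖g‖) • v, ?_⟩
    have : f (p - ((f p - c) / ‖g‖) • v) = c := by
      rw [map_sub, map_smul, smul_eq_mul, ← hgx v, hgv, div_mul_cancel₀ _ hgpos.ne']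
      ring
    simp [hH, this]
  -- lower bound on infDist
  have hlow : ∀ x : E, (f x - c) / ‖g‖ ≤ Metric.infDist x H := by
    intro x
    by_contra hcon
    push_neg at hcon
    obtain ⟨y, hyH, hyd⟩ := (Metric.infDist_lt_iff hHne).mp hcon
    have hyc : f y ≤ c := hyH
    have hbound := g.le_opNorm (x - y)
    rw [map_sub, hgx, hgx] at hbound
    have h1 : f x - f y ≤ ‖g‖ * ‖x - y‖ :=
      le_trans (le_abs_self _) hbound
    rw [dist_eq_norm] at hyd
    have h2 : ‖x - y‖ < (f x - c) / ‖g‖ := hyd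
    rw [lt_div_iff₀ hgpos] at h2
    nlinarith
  -- upper bound on infDist when outside
  have hupp : ∀ x : E, c ≤ f x → Metric.infDist x H ≤ (f x - c) / ‖g‖ := by
    intro x hx
    have hyH : x - ((f x - c) / ‖g‖) • v ∈ H := by
      have : f (x - ((f x - c) / ‖g‖) • v) = c := by
        rw [map_sub, map_smul, smul_eq_mul, ← hgx v, hgv, div_mul_cancel₀ _ hgpos.ne']
        ring
      simp [hH, this]
    calc Metric.infDist x H ≤ dist x (x - ((f x - c) / ‖g‖) • v) :=
          Metric.infDist_le_dist_of_mem hyH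
      _ = ‖((f x - c) / ‖g‖) • v‖ := by rw [dist_eq_norm, sub_sub_cancel]
      _ = (f x - c) / ‖g‖ := by
          rw [norm_smul, hv1, mul_one, Real.norm_eq_abs,
            abs_of_nonneg (div_nonneg (by linarith) hgpos.le)]
  have hpc : c < f p := lt_of_not_ge hp
  -- set equality
  have hset : {x : E | dist x p ≤ Metric.infDist x H}
      = {x : E | ‖g‖ * dist x p ≤ f x - c} := by
    ext x
    simp only [Set.mem_setOf_eq]
    constructor
    · intro hx
      by_cases hxc : f x ≤ c
      · exfalso
        have h0 : Metric.infDist x H = 0 := Metric.infDist_zero_of_mem hxc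
        rw [h0] at hx
        have hxp : x = p := dist_eq_zero.mp (le_antisymm hx dist_nonneg)
        rw [hxp] at hxc
        linarith
      · push_neg at hxc
        have := le_trans hx (hupp x hxc.le)
        rw [le_div_iff₀ hgpos] at this
        linarith [this]
    · intro hx
      have h1 : dist x p ≤ (f x - c) / ‖g‖ := by
        rw [le_div_iff₀ hgpos]; linarith [hx, mul_comm ‖g‖ (dist x p)]
      exact le_trans h1 (hlow x)
  rw [hset]
  -- convexity of the sublevel set
  intro x hx y hy a b ha hb hab
  simp only [Set.mem_setOf_eq] at hx hy ⊢
  have hdist : dist (a • x + b • y) p ≤ a * dist x p + b * dist y p := by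
    have hp' : p = a • p + b • p := by rw [← add_smul, hab, one_smul]
    have heq : a • x + b • y - p = a • (x - p) + b • (y - p) := by
      conv_lhs => rw [hp']
      rw [smul_sub, smul_sub]
      abel
    rw [dist_eq_norm, heq]
    calc ‖a • (x - p) + b • (y - p)‖ ≤ ‖a • (x - p)‖ + ‖b • (y - p)‖ := norm_add_le _ _
      _ = a * ‖x - p‖ + b * ‖y - p‖ := by
          rw [norm_smul, norm_smul, Real.norm_eq_abs, Real.norm_eq_abs,
            abs_of_nonneg ha, abs_of_nonneg hb]
      _ = a * dist x p + b * dist y p := by rw [dist_eq_norm, dist_eq_norm]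
  have hfx : f (a • x + b • y) = a * f x + b * f y := by
    rw [map_add, map_smul, map_smul]; rfl
  calc ‖g‖ * dist (a • x + b • y) p ≤ ‖g‖ * (a * dist x p + b * dist y p) :=
        mul_le_mul_of_nonneg_left hdist hgpos.le
    _ = a * (‖g‖ * dist x p) + b * (‖g‖ * dist y p) := by ring
    _ ≤ a * (f x - c) + b * (f y - c) := by
        apply add_le_add
        · exact mul_le_mul_of_nonneg_left hx ha
        · exact mul_le_mul_of_nonneg_left hy hb
    _ = f (a • x + b • y) - c := by rw [hfx]; linear_combination (-c) * hab
end

section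
/- Let ‖·‖ be any norm on ℝ^d, let A ⊆ ℝ^d be a closed set whose complement is convex, and let p ∉ A. Then dom(p, A) = {x : ‖x−p‖ ≤ dist(x,A)} is convex. -/
/-!
When `Aᶜ` is convex, `x ↦ infDist x A` is concave on `Aᶜ`: if `w ∈ A` were closer to
`z = a • x + b • y` than `R = a * infDist x A + b * infDist y A`, then with `u = R⁻¹ • (w - z)`
(so `‖u‖ < 1`) the points `x + infDist x A • u` and `y + infDist y A • u` lie off `A`, yet `w` is
their convex combination. The dominance region lies in `Aᶜ` (a point of `A` in it would be `p`),
where it is the sublevel set `{f ≤ 0}` of the convex function `f x = dist x p - infDist x A`.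
-/

open EMetric

section

variable {E : Type*} [NormedAddCommGroup E] [NormedSpace ℝ E] {A : Set E}

open Metric in
theorem add_infDist_smul_notMem {x u : E} (hx : x ∉ A) (hu : ‖u‖ < 1) :
    x + infDist x A • u ∉ A := by
  rcases (infDist_nonneg (x := x) (s := A)).eq_or_lt with h | h
  · simpa [← h] using hx
  · refine ball_infDist_subset_compl (x := x) ?_
    rw [Metric.mem_ball, dist_self_add_left, norm_smul, Real.norm_of_nonneg h.le]
    exact mul_lt_of_lt_one_right h hu

open Metric in
theorem concaveOn_infDist_of_convex_compl (hAc : Convex ℝ Aᶜ) :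
    ConcaveOn ℝ Aᶜ (infDist · A) := by
  refine ⟨hAc, fun x hx y hy a b ha hb hab => ?_⟩
  rcases A.eq_empty_or_nonempty with rfl | hne
  · simp
  set z := a • x + b • y
  set R := a * infDist x A + b * infDist y A
  simp only [smul_eq_mul]
  by_contra! hlt
  obtain ⟨w, hw, hzw⟩ := (infDist_lt_iff hne).mp hlt
  have hR : 0 < R := dist_nonneg.trans_lt hzw
  set u := R⁻¹ • (w - z)
  have hu : ‖u‖ < 1 := by
    rw [norm_smul, Real.norm_of_nonneg (inv_nonneg.mpr hR.le), ← dist_eq_norm',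
      inv_mul_lt_one₀ hR]
    exact hzw
  have hcomb : a • (x + infDist x A • u) + b • (y + infDist y A • u) = w :=
    calc _ = z + R • u := by simp only [z, R, smul_add, add_smul, smul_smul]; abel
      _ = w := by simp only [u, smul_smul, mul_inv_cancel₀ hR.ne', one_smul, add_sub_cancel]
  exact hAc (add_infDist_smul_notMem hx hu) (add_infDist_smul_notMem hy hu) ha hb hab (hcomb ▸ hw)

end

theorem dom_point_convex_complement_general (E : Type*) [NormedAddCommGroup E] [NormedSpace ℝ E]
    (A : Set E) (hAc : Convex ℝ Aᶜ)
    (p : E) (hp : p ∉ A) :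
    Convex ℝ {x : E | edist x p ≤ infEdist x A} := by
  change Convex ℝ {x : E | edist x p ≤ Metric.infEDist x A}
  rcases A.eq_empty_or_nonempty with rfl | hne
  · simpa using convex_univ
  convert ((convexOn_dist p hAc).sub (concaveOn_infDist_of_convex_compl hAc)).convex_le 0 using 1
  ext x
  simp only [Set.mem_ofPred_eq, Set.mem_compl_iff, Pi.sub_apply, sub_nonpos]
  rw [edist_dist, ENNReal.ofReal_le_iff_le_toReal (Metric.infEDist_ne_top hne)]
  refine ⟨fun h => ⟨fun hx => hp ?_, h⟩, And.right⟩
  obtain rfl : x = p := dist_le_zero.mp (h.trans_eq (Metric.infDist_zero_of_mem hx))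
  exact hx

/-- In any finite-dimensional normed space, the dominance region of a point over a
closed set with convex complement is convex. -/
theorem dom_point_convex_complement (E : Type*) [NormedAddCommGroup E] [NormedSpace ℝ E]
    [FiniteDimensional ℝ E] (A : Set E) (hA : IsClosed A) (hAc : Convex ℝ Aᶜ)
    (p : E) (hp : p ∉ A) :
    Convex ℝ {x : E | edist x p ≤ infEdist x A} :=
  dom_point_convex_complement_general E A hAc p hp
end

section
/- Let ‖·‖ be a rotund norm on ℝ^d with unit ball B = B(0,1). For every η > 0 there exists δ > 0 such that for every x ∈ ℝ^d with ‖x‖ ≤ 1 + δ, the 'cap' conv(B ∪ {x}) \ B has (‖·‖-)diameter at most η. -/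
/-!
In finite dimension rotundity is uniform: for `ε > 0` there is `ρ > 0` with `‖u + v‖ ≤ 2 - ρ`
whenever `‖u‖, ‖v‖ ≤ 1` and `‖u - v‖ ≥ ε`. A point `p` of the cap lies on a segment `[x, z]` with
`‖z‖ ≤ 1`. If `z` is far from `x`, the midpoint of `[x, z]` lies about `ρ / 2` inside the ball, and
convexity of the norm along `[x, z]` pushes every point of the segment at relative distance more
than about `δ / ρ` from `x` back into the ball. Hence the cap lies in a ball around `x` of radius
`O(ε + δ / ρ)`.
-/

open Metric Set

section UniformConvexity

variable (E : Type*) [NormedAddCommGroup E] [NormedSpace ℝ E]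

theorem StrictConvexSpace.of_norm_midpoint_lt_one
    (h : ∀ x y : E, ‖x‖ = 1 → ‖y‖ = 1 → x ≠ y → ‖(1 / 2 : ℝ) • (x + y)‖ < 1) :
    StrictConvexSpace ℝ E :=
  StrictConvexSpace.of_norm_add_ne_two fun x y hx hy hne => by
    have := h x y hx hy hne
    rw [norm_smul, Real.norm_of_nonneg (by norm_num)] at this
    linarith

theorem UniformConvexSpace.of_finiteDimensional [FiniteDimensional ℝ E] [StrictConvexSpace ℝ E] :
    UniformConvexSpace E where
  uniform_convex ε hε := by
    let K : Set (E × E) := (sphere 0 1 ×ˢ sphere 0 1) ∩ {p | ε ≤ ‖p.1 - p.2‖}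
    have hK : IsCompact K := ((isCompact_sphere 0 1).prod (isCompact_sphere 0 1)).inter_right
      (isClosed_le continuous_const (by fun_prop))
    have hlt : ∀ p ∈ K, 0 < 2 - ‖p.1 + p.2‖ := by
      rintro ⟨x, y⟩ ⟨⟨hx, hy⟩, hxy⟩
      rw [mem_sphere_zero_iff_norm] at hx hy
      have hne : x ≠ y := by
        rintro rfl
        exact hε.not_ge (by simpa using hxy)
      have := norm_add_lt_of_not_sameRay ((not_sameRay_iff_of_norm_eq (hx.trans hy.symm)).2 hne)
      linarith
    obtain ⟨δ, hδ, hbound⟩ := hK.exists_forall_le' (by fun_prop) hlt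
    exact ⟨δ, hδ, fun x hx y hy hxy => by
      linarith [hbound (x, y) ⟨⟨mem_sphere_zero_iff_norm.2 hx, mem_sphere_zero_iff_norm.2 hy⟩, hxy⟩]⟩

end UniformConvexity

section Cap

variable {E : Type*} [NormedAddCommGroup E] [NormedSpace ℝ E]

theorem mul_norm_sub_le_of_mem_segment_of_one_lt_norm {x z p : E} {δ κ : ℝ} (hκ : 0 < κ)
    (hx : ‖x‖ ≤ 1 + δ) (hz : ‖z‖ ≤ 1) (hm : ‖(1 / 2 : ℝ) • (x + z)‖ ≤ 1 - κ)
    (hp : p ∈ segment ℝ x z) (hp1 : 1 < ‖p‖) :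
    2 * κ * ‖p - x‖ ≤ δ * ‖x - z‖ := by
  obtain ⟨a, b, ha, hb, hab, rfl⟩ := hp
  obtain rfl : a = 1 - b := by linarith
  have hdist : ‖(1 - b) • x + b • z - x‖ = b * ‖x - z‖ := by
    rw [show (1 - b) • x + b • z - x = b • (z - x) by module, norm_smul, Real.norm_of_nonneg hb,
      norm_sub_rev]
  set m : E := (1 / 2 : ℝ) • (x + z)
  rcases le_or_gt b (1 / 2) with hb2 | hb2
  · have hnorm := convexOn_univ_norm.2 (mem_univ x) (mem_univ m)
      (show 0 ≤ 1 - 2 * b by linarith) (show 0 ≤ 2 * b by linarith) (by ring)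
    rw [show (1 - 2 * b) • x + (2 * b) • m = (1 - b) • x + b • z by module,
      smul_eq_mul, smul_eq_mul] at hnorm
    rw [hdist]
    have hκb : 2 * b * κ < (1 - 2 * b) * δ := by
      nlinarith [mul_le_mul_of_nonneg_left hx (show 0 ≤ 1 - 2 * b by linarith),
        mul_le_mul_of_nonneg_left hm (show 0 ≤ 2 * b by linarith)]
    have hδ : 0 < δ := by nlinarith
    have : 2 * b * κ ≤ δ := by nlinarith
    nlinarith [norm_nonneg (x - z)]
  · have hnorm := convexOn_univ_norm.2 (mem_univ m) (mem_univ z)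
      (show 0 ≤ 2 - 2 * b by linarith) (show 0 ≤ 2 * b - 1 by linarith) (by ring)
    rw [show (2 - 2 * b) • m + (2 * b - 1) • z = (1 - b) • x + b • z by module,
      smul_eq_mul, smul_eq_mul] at hnorm
    nlinarith [mul_le_mul_of_nonneg_left hm (show 0 ≤ 2 - 2 * b by linarith),
      mul_le_mul_of_nonneg_left hz (show 0 ≤ 2 * b - 1 by linarith)]

theorem norm_add_le_two_sub_add_of_uniform {ε ρ δ : ℝ} {x z : E}
    (hunif : ∀ ⦃u : E⦄, ‖u‖ ≤ 1 → ∀ ⦃v : E⦄, ‖v‖ ≤ 1 → ε ≤ ‖u - v‖ → ‖u + v‖ ≤ 2 - ρ) (hδ : 0 ≤ δ)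
    (hx : ‖x‖ ≤ 1 + δ) (hz : ‖z‖ ≤ 1) (hxz : ε + δ ≤ ‖x - z‖) :
    ‖x + z‖ ≤ 2 - ρ + δ := by
  set v : E := (1 + δ)⁻¹ • x
  have hv : ‖v‖ ≤ 1 := by
    rw [norm_smul, Real.norm_of_nonneg (by positivity), inv_mul_le_iff₀ (by positivity)]
    linarith
  have hxv : ‖x - v‖ ≤ δ := by
    rw [show x - v = (1 - (1 + δ)⁻¹) • x by module, norm_smul,
      Real.norm_of_nonneg (sub_nonneg.2 (inv_le_one_of_one_le₀ (by linarith)))]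
    calc (1 - (1 + δ)⁻¹) * ‖x‖ ≤ (1 - (1 + δ)⁻¹) * (1 + δ) :=
          mul_le_mul_of_nonneg_left hx (sub_nonneg.2 (inv_le_one_of_one_le₀ (by linarith)))
      _ = δ := by field_simp; ring
  have hvz : ε ≤ ‖v - z‖ := by
    have := norm_sub_le_norm_sub_add_norm_sub x v z
    linarith
  calc ‖x + z‖ = ‖(v + z) + (x - v)‖ := by congr 1; abel
    _ ≤ ‖v + z‖ + ‖x - v‖ := norm_add_le _ _
    _ ≤ 2 - ρ + δ := add_le_add (hunif hv hz hvz) hxv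

theorem convexHull_closedBall_union_singleton_diff_subset {ε ρ δ : ℝ} {x : E}
    (hunif : ∀ ⦃u : E⦄, ‖u‖ ≤ 1 → ∀ ⦃v : E⦄, ‖v‖ ≤ 1 → ε ≤ ‖u - v‖ → ‖u + v‖ ≤ 2 - ρ) (hδ : 0 ≤ δ)
    (hδρ : δ < ρ) (hx : ‖x‖ ≤ 1 + δ) :
    convexHull ℝ (closedBall (0 : E) 1 ∪ {x}) \ closedBall 0 1 ⊆
      closedBall x (max (ε + δ) (δ * (2 + δ) / (ρ - δ))) := by
  rintro p ⟨hp, hpB⟩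
  rw [union_singleton, convexHull_insert (nonempty_closedBall.2 zero_le_one),
    (convex_closedBall 0 1).convexHull_eq, mem_convexJoin] at hp
  obtain ⟨w, hw, z, hz, hpxz⟩ := hp
  rw [mem_singleton_iff.1 hw] at hpxz
  rw [mem_closedBall_zero_iff] at hz
  rw [mem_closedBall, dist_eq_norm]
  rcases lt_or_ge ‖x - z‖ (ε + δ) with hnear | hfar
  · refine le_max_of_le_left ((norm_sub_le_of_mem_segment hpxz).trans ?_)
    rw [norm_sub_rev]
    exact hnear.le
  · have hm : ‖(1 / 2 : ℝ) • (x + z)‖ ≤ 1 - (ρ - δ) / 2 := by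
      rw [norm_smul, Real.norm_of_nonneg (by norm_num)]
      linarith [norm_add_le_two_sub_add_of_uniform hunif hδ hx hz hfar]
    have := mul_norm_sub_le_of_mem_segment_of_one_lt_norm (by linarith) hx hz hm hpxz
      (by simpa using hpB)
    refine le_max_of_le_right ?_
    rw [le_div_iff₀ (by linarith)]
    nlinarith [norm_sub_le x z]

end Cap

/-- For a rotund norm on a finite-dimensional space, the cap `conv(B ∪ {x}) \ B`
cut off by a point `x` of norm at most `1 + δ` has diameter at most `η`,
provided `δ` is small enough in terms of `η`. -/
theorem small_cap_of_rotund (E : Type*) [NormedAddCommGroup E] [NormedSpace ℝ E]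
    [FiniteDimensional ℝ E]
    (hrot : ∀ x y : E, ‖x‖ = 1 → ‖y‖ = 1 → x ≠ y → ‖(1 / 2 : ℝ) • (x + y)‖ < 1) :
    ∀ η : ℝ, 0 < η → ∃ δ : ℝ, 0 < δ ∧ ∀ x : E, ‖x‖ ≤ 1 + δ →
      Metric.diam (convexHull ℝ (Metric.closedBall (0 : E) 1 ∪ {x})
        \ Metric.closedBall (0 : E) 1) ≤ η := by
  intro η hη
  have := StrictConvexSpace.of_norm_midpoint_lt_one E hrot
  have := UniformConvexSpace.of_finiteDimensional E
  obtain ⟨ρ, hρ, hunif⟩ := exists_forall_closed_ball_dist_add_le_two_sub E (ε := η / 4)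
    (by positivity)
  set δ := min (min 1 (ρ / 2)) (min (η / 4) (ρ * η / 12))
  have hδ : 0 < δ := by positivity
  have hδ1 : δ ≤ 1 := (min_le_left _ _).trans (min_le_left _ _)
  have hδρ : δ ≤ ρ / 2 := (min_le_left _ _).trans (min_le_right _ _)
  have hδη : δ ≤ η / 4 := (min_le_right _ _).trans (min_le_left _ _)
  have hδρη : δ ≤ ρ * η / 12 := (min_le_right _ _).trans (min_le_right _ _)
  refine ⟨δ, hδ, fun x hx => ?_⟩
  calc diam (convexHull ℝ (closedBall (0 : E) 1 ∪ {x}) \ closedBall 0 1)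
      ≤ 2 * max (η / 4 + δ) (δ * (2 + δ) / (ρ - δ)) :=
        diam_le_of_subset_closedBall (by positivity)
          (convexHull_closedBall_union_singleton_diff_subset hunif hδ.le (by linarith) hx)
    _ ≤ 2 * (η / 2) := by
      gcongr
      refine max_le (by linarith) ?_
      rw [div_le_iff₀ (by linarith)]
      nlinarith
    _ = η := by ring
end

section
/- Let ‖·‖ be a smooth norm on ℝ^d (the function x ↦ ‖x‖ is differentiable away from 0). For each nonzero vector a, let T⁺(a) denote the open halfspace defined by the supporting hyperplane at 0 of the ball B(−a, ‖a‖), on the side not containing the ball. Define a ∼ b iff T⁺(a) = T⁺(b). Then for nonzero vectors a₁,...,a_m, ‖a₁+⋯+a_m‖ = ‖a₁‖+⋯+‖a_m‖ if and only if a₁ ∼ a₂ ∼ ⋯ ∼ a_m. -/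
/-- For a smooth norm, `Tpos a` is the open halfspace bounded by the supporting
hyperplane at `0` of the ball `B(−a, ‖a‖)`, on the side not containing the ball.
Its boundary hyperplane is the kernel of the derivative of the norm at `a`. -/
def Tpos {E : Type*} [NormedAddCommGroup E] [NormedSpace ℝ E] (a : E) : Set E :=
  {x : E | 0 < fderiv ℝ (fun z : E => ‖z‖) a x}

/-- one-sided derivative upper bound -/
lemma deriv_le_of_slope_le {h : ℝ → ℝ} {c M : ℝ} (hd : HasDerivAt h c 0)
    (hle : ∀ t : ℝ, 0 < t → h t ≤ h 0 + t * M) : c ≤ M := by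
  have hs := hasDerivAt_iff_tendsto_slope.1 hd
  have hs' : Filter.Tendsto (slope h 0) (nhdsWithin 0 (Set.Ioi 0)) (nhds c) :=
    hs.mono_left (nhdsWithin_mono 0 (fun t ht => ne_of_gt ht))
  refine le_of_tendsto hs' ?_
  filter_upwards [self_mem_nhdsWithin] with t ht
  have ht' : (0:ℝ) < t := ht
  have := hle t ht'
  rw [slope_def_field]
  simp only [sub_zero]
  rw [div_le_iff₀ ht']
  linarith [this]

lemma deriv_eq_of_affine_le {h : ℝ → ℝ} {c L : ℝ} (hd : HasDerivAt h c 0)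
    (hge : ∀ t : ℝ, h 0 + t * L ≤ h t) : c = L := by
  have hs := hasDerivAt_iff_tendsto_slope.1 hd
  have h1 : L ≤ c := by
    have hs' : Filter.Tendsto (slope h 0) (nhdsWithin 0 (Set.Ioi 0)) (nhds c) :=
      hs.mono_left (nhdsWithin_mono 0 (fun t ht => ne_of_gt ht))
    refine ge_of_tendsto hs' ?_
    filter_upwards [self_mem_nhdsWithin] with t ht
    have ht' : (0:ℝ) < t := ht
    have := hge t
    rw [slope_def_field]
    simp only [sub_zero]
    rw [le_div_iff₀ ht']
    linarith
  have h2 : c ≤ L := by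
    have hs' : Filter.Tendsto (slope h 0) (nhdsWithin 0 (Set.Iio 0)) (nhds c) :=
      hs.mono_left (nhdsWithin_mono 0 (fun t ht => ne_of_lt ht))
    refine le_of_tendsto hs' ?_
    filter_upwards [self_mem_nhdsWithin] with t ht
    have ht' : t < (0:ℝ) := ht
    have := hge t
    rw [slope_def_field]
    simp only [sub_zero]
    rw [div_le_iff_of_neg ht']
    linarith
  linarith

section
variable {E : Type*} [NormedAddCommGroup E] [NormedSpace ℝ E]

lemma line_hasDerivAt (a y : E) : HasDerivAt (fun t : ℝ => a + t • y) y 0 := by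
  simpa using ((hasDerivAt_id (0:ℝ)).smul_const y).const_add a

lemma norm_line_hasDerivAt {a : E} (hd : DifferentiableAt ℝ (fun z : E => ‖z‖) a) (y : E) :
    HasDerivAt (fun t : ℝ => ‖a + t • y‖) (fderiv ℝ (fun z : E => ‖z‖) a y) 0 := by
  have ha' : HasFDerivAt (fun z : E => ‖z‖) (fderiv ℝ (fun z : E => ‖z‖) a) (a + (0:ℝ) • y) := by
    simpa using hd.hasFDerivAt
  exact ha'.comp_hasDerivAt (0:ℝ) (line_hasDerivAt a y)

lemma fderiv_norm_le {a : E} (hd : DifferentiableAt ℝ (fun z : E => ‖z‖) a) (y : E) :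
    fderiv ℝ (fun z : E => ‖z‖) a y ≤ ‖y‖ := by
  refine deriv_le_of_slope_le (norm_line_hasDerivAt hd y) (fun t ht => ?_)
  calc ‖a + t • y‖ ≤ ‖a‖ + ‖t • y‖ := norm_add_le _ _
    _ = ‖(a:E) + (0:ℝ) • y‖ + t * ‖y‖ := by
        rw [norm_smul]; simp [abs_of_pos ht]

lemma fderiv_norm_support {a : E} (hd : DifferentiableAt ℝ (fun z : E => ‖z‖) a)
    (f : E →L[ℝ] ℝ) (hf : ∀ x, f x ≤ ‖x‖) (hfa : f a = ‖a‖) :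
    fderiv ℝ (fun z : E => ‖z‖) a = f := by
  ext y
  refine deriv_eq_of_affine_le (norm_line_hasDerivAt hd y) (fun t => ?_)
  have : f (a + t • y) ≤ ‖a + t • y‖ := hf _
  simp only [map_add, map_smul, smul_eq_mul, hfa] at this
  simpa using this

lemma fderiv_norm_self {a : E} (ha : a ≠ 0)
    (hd : DifferentiableAt ℝ (fun z : E => ‖z‖) a) :
    fderiv ℝ (fun z : E => ‖z‖) a a = ‖a‖ := by
  refine deriv_eq_of_affine_le (norm_line_hasDerivAt hd a) (fun t => ?_)
  have : ‖(0:ℝ) • a‖ = 0 := by simp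
  calc ‖a + (0:ℝ) • a‖ + t * ‖a‖ = (1 + t) * ‖a‖ := by simp; ring
    _ ≤ |1 + t| * ‖a‖ := by
        gcongr
        exact le_abs_self _
    _ = ‖(1 + t) • a‖ := by rw [norm_smul, Real.norm_eq_abs]
    _ = ‖a + t • a‖ := by rw [add_smul, one_smul]

lemma tpos_eq_imp {a b : E} (ha : a ≠ 0) (hb : b ≠ 0)
    (hda : DifferentiableAt ℝ (fun z : E => ‖z‖) a)
    (hdb : DifferentiableAt ℝ (fun z : E => ‖z‖) b)
    (h : Tpos a = Tpos b) :
    fderiv ℝ (fun z : E => ‖z‖) a = fderiv ℝ (fun z : E => ‖z‖) b := by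
  set f := fderiv ℝ (fun z : E => ‖z‖) a with hfdef
  set g := fderiv ℝ (fun z : E => ‖z‖) b with hgdef
  have hmem : ∀ x : E, 0 < f x ↔ 0 < g x := by
    intro x
    constructor
    · intro hx; have : x ∈ Tpos a := hx; rw [h] at this; exact this
    · intro hx; have : x ∈ Tpos b := hx; rw [← h] at this; exact this
  have hga : g a ≤ ‖a‖ := fderiv_norm_le hdb a
  have hgb : g b = ‖b‖ := fderiv_norm_self hb hdb
  have hfa : f a = ‖a‖ := fderiv_norm_self ha hda
  have hfb : f b ≤ ‖b‖ := fderiv_norm_le hda b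
  have hbpos : (0:ℝ) < ‖b‖ := norm_pos_iff.2 hb
  have hapos : (0:ℝ) < ‖a‖ := norm_pos_iff.2 ha
  -- kernel containment
  have hker : ∀ x : E, g x = 0 → f x = 0 := by
    intro x hx
    by_contra hfx
    rcases lt_or_gt_of_ne hfx with hlt | hgt
    · have : 0 < f (-x) := by simpa using neg_pos.2 hlt
      have := (hmem (-x)).1 this
      simp [hx] at this
    · have := (hmem x).1 hgt
      simp [hx] at this
  set u : E := ‖b‖⁻¹ • b with hu
  have hgu : g u = 1 := by
    simp [hu, map_smul, hgb, inv_mul_cancel₀ hbpos.ne']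
  set c : ℝ := f u with hc
  have hcpos : 0 < c := by
    refine (hmem u).2 ?_
    rw [hgu]; norm_num
  have hscale : ∀ x : E, f x = g x * c := by
    intro x
    have hx0 : g (x - g x • u) = 0 := by
      simp [map_sub, map_smul, hgu]
    have := hker _ hx0
    simp only [map_sub, map_smul, smul_eq_mul] at this
    linarith [this]
  have hcle : c ≤ 1 := by
    have := hscale b
    rw [hgb] at this
    nlinarith
  have hcge : 1 ≤ c := by
    have := hscale a
    rw [hfa] at this
    nlinarith
  have hc1 : c = 1 := le_antisymm hcle hcge
  ext x
  have := hscale x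
  rw [hc1] at this
  simpa using this

end

/-- For nonzero vectors `a 1, …, a m` in a space with a smooth norm,
`‖a 1 + ⋯ + a m‖ = ‖a 1‖ + ⋯ + ‖a m‖` iff `a 1 ∼ a 2 ∼ ⋯ ∼ a m`, where
`a ∼ b` means `Tpos a = Tpos b`. -/
theorem norm_sum_eq_sum_norm_iff (E : Type*) [NormedAddCommGroup E] [NormedSpace ℝ E]
    [FiniteDimensional ℝ E]
    (hsmooth : ∀ x : E, x ≠ 0 → DifferentiableAt ℝ (fun z : E => ‖z‖) x)
    (m : ℕ) (a : Fin m → E) (ha : ∀ i, a i ≠ 0) :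
    ‖∑ i, a i‖ = ∑ i, ‖a i‖ ↔ ∀ i j, Tpos (a i) = Tpos (a j) := by
  constructor
  · intro h i j
    set s : E := ∑ k, a k with hs
    have hspos : (0:ℝ) < ‖s‖ := by
      rw [h]
      have : (0:ℝ) < ‖a i‖ := norm_pos_iff.2 (ha i)
      have hle : ‖a i‖ ≤ ∑ k, ‖a k‖ :=
        Finset.single_le_sum (fun k _ => norm_nonneg _) (Finset.mem_univ i)
      linarith
    have hsne : s ≠ 0 := by
      intro h0; rw [h0] at hspos; simp at hspos
    have hds := hsmooth s hsne
    set f := fderiv ℝ (fun z : E => ‖z‖) s with hf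
    have hfle : ∀ x, f x ≤ ‖x‖ := fun x => fderiv_norm_le hds x
    have hfs : f s = ‖s‖ := fderiv_norm_self hsne hds
    have hsum : ∑ k, f (a k) = ∑ k, ‖a k‖ := by
      rw [← map_sum, ← hs, hfs, h]
    have hall : ∀ k : Fin m, f (a k) = ‖a k‖ := by
      intro k
      have := (Finset.sum_eq_sum_iff_of_le (fun k _ => hfle (a k))).1 hsum
      exact this k (Finset.mem_univ k)
    have heq : ∀ k : Fin m, fderiv ℝ (fun z : E => ‖z‖) (a k) = f := fun k =>
      fderiv_norm_support (hsmooth _ (ha k)) f hfle (hall k)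
    unfold Tpos
    rw [heq i, heq j]
  · intro h
    rcases Nat.eq_zero_or_pos m with hm | hm
    · subst hm; simp
    · have i0 : Fin m := ⟨0, hm⟩
      set f := fderiv ℝ (fun z : E => ‖z‖) (a i0) with hf
      have heq : ∀ k : Fin m, fderiv ℝ (fun z : E => ‖z‖) (a k) = f := fun k =>
        tpos_eq_imp (ha k) (ha i0) (hsmooth _ (ha k)) (hsmooth _ (ha i0)) (h k i0)
      have hfk : ∀ k, f (a k) = ‖a k‖ := by
        intro k
        rw [← heq k]
        exact fderiv_norm_self (ha k) (hsmooth _ (ha k))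
      have h1 : ∑ k, ‖a k‖ = f (∑ k, a k) := by
        rw [map_sum]
        exact (Finset.sum_congr rfl (fun k _ => (hfk k).symm))
      have h2 : f (∑ k, a k) ≤ ‖∑ k, a k‖ := fderiv_norm_le (hsmooth _ (ha i0)) _
      have h3 : ‖∑ k, a k‖ ≤ ∑ k, ‖a k‖ := norm_sum_le _ _
      linarith
end

section
/- Let ‖·‖ be a smooth norm on ℝ^d. Then there exist α > 0 and β > 0 such that for all unit vectors u, v with ‖u + v‖ > 2 − β, we have ‖u − α v‖ ≤ 1. -/
open Filter Topology Set

/-- For a smooth norm on a finite-dimensional space: there are `α, β > 0` such that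
whenever unit vectors `u, v` satisfy `‖u + v‖ > 2 − β`, we have `‖u − α v‖ ≤ 1`. -/
theorem almost_straight (E : Type*) [NormedAddCommGroup E] [NormedSpace ℝ E]
    [FiniteDimensional ℝ E]
    (hsmooth : ∀ x : E, x ≠ 0 → DifferentiableAt ℝ (fun z : E => ‖z‖) x) :
    ∃ α β : ℝ, 0 < α ∧ 0 < β ∧
      ∀ u v : E, ‖u‖ = 1 → ‖v‖ = 1 → 2 - β < ‖u + v‖ → ‖u - α • v‖ ≤ 1 := by
  by_contra hcon
  push_neg at hcon
  -- hcon : ∀ α β, 0 < α → 0 < β → ∃ u v, ‖u‖ = 1 ∧ ‖v‖ = 1 ∧ 2 - β < ‖u+v‖ ∧ 1 < ‖u - α•v‖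
  set K : ℕ → Set (E × E) := fun n =>
    {p : E × E | ‖p.1‖ = 1 ∧ ‖p.2‖ = 1 ∧ 2 - 1/(n+1) ≤ ‖p.1 + p.2‖ ∧
      ∀ t : ℝ, 1/(n+1) ≤ t → 1 ≤ ‖p.1 - t • p.2‖} with hKdef
  have hsub : ∀ n, K (n+1) ⊆ K n := by
    intro n p hp
    obtain ⟨h1, h2, h3, h4⟩ := hp
    have hle : (1:ℝ)/(n+1) ≥ 1/(n+1+1) := by
      apply one_div_le_one_div_of_le <;> push_cast <;> linarith
    refine ⟨h1, h2, by push_cast at h3 ⊢; linarith, fun t ht => h4 t (by push_cast at ht ⊢; linarith [hle])⟩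
  have hne : ∀ n, (K n).Nonempty := by
    intro n
    have hn : (0:ℝ) < 1/(n+1) := by positivity
    obtain ⟨u, v, hu, hv, huv, hgt⟩ := hcon (1/(n+1)) (1/(n+1)) hn hn
    refine ⟨(u, v), hu, hv, le_of_lt huv, ?_⟩
    intro t ht
    have htpos : (0:ℝ) < t := lt_of_lt_of_le hn ht
    set s : ℝ := (1/(n+1)) / t with hs
    have hs0 : 0 < s := by positivity
    have hs1 : s ≤ 1 := by
      rw [hs, div_le_one htpos]; exact ht
    have hst : s * t = 1/(n+1) := div_mul_cancel₀ _ (ne_of_gt htpos)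
    have key : u - ((1:ℝ)/(n+1)) • v = s • (u - t • v) + (1 - s) • u := by
      rw [← hst]; module
    have hbound : ‖u - ((1:ℝ)/(n+1)) • v‖ ≤ s * ‖u - t • v‖ + (1 - s) := by
      rw [key]
      calc ‖s • (u - t • v) + (1 - s) • u‖ ≤ ‖s • (u - t • v)‖ + ‖(1 - s) • u‖ :=
            norm_add_le _ _
        _ = s * ‖u - t • v‖ + (1 - s) := by
            rw [norm_smul, norm_smul, hu, Real.norm_of_nonneg hs0.le,
              Real.norm_of_nonneg (by linarith), mul_one]
    nlinarith [hgt, hbound, hs0]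
  have hcl : ∀ n, IsClosed (K n) := by
    intro n
    have h1 : IsClosed {p : E × E | ‖p.1‖ = 1} :=
      isClosed_eq (continuous_fst.norm) continuous_const
    have h2 : IsClosed {p : E × E | ‖p.2‖ = 1} :=
      isClosed_eq (continuous_snd.norm) continuous_const
    have h3 : IsClosed {p : E × E | 2 - 1/(n+1) ≤ ‖p.1 + p.2‖} :=
      isClosed_le continuous_const ((continuous_fst.add continuous_snd).norm)
    have h4 : IsClosed {p : E × E | ∀ t : ℝ, 1/(n+1) ≤ t → 1 ≤ ‖p.1 - t • p.2‖} := by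
      have heq : {p : E × E | ∀ t : ℝ, 1/(n+1) ≤ t → 1 ≤ ‖p.1 - t • p.2‖}
          = ⋂ t : ℝ, ⋂ _ : 1/(n+1) ≤ t, {p : E × E | 1 ≤ ‖p.1 - t • p.2‖} := by
        ext p; simp only [Set.mem_iInter, Set.mem_setOf_eq]
      rw [heq]
      exact isClosed_iInter fun t => isClosed_iInter fun _ =>
        isClosed_le continuous_const ((continuous_fst.sub (continuous_snd.const_smul t)).norm)
    exact h1.inter (h2.inter (h3.inter h4))
  have hcomp : IsCompact (K 0) := by
    apply IsCompact.of_isClosed_subset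
      (((isCompact_sphere (0:E) 1)).prod (isCompact_sphere (0:E) 1)) (hcl 0)
    intro p hp
    exact Set.mem_prod.2 ⟨by simp [mem_sphere_zero_iff_norm, hp.1],
      by simp [mem_sphere_zero_iff_norm, hp.2.1]⟩
  obtain ⟨⟨u, v⟩, hmem⟩ :=
    IsCompact.nonempty_iInter_of_sequence_nonempty_isCompact_isClosed K hsub hne hcomp hcl
  simp only [Set.mem_iInter] at hmem
  have hu : ‖u‖ = 1 := (hmem 0).1
  have hv : ‖v‖ = 1 := (hmem 0).2.1
  have hall : ∀ t : ℝ, 0 < t → 1 ≤ ‖u - t • v‖ := by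
    intro t ht
    obtain ⟨n, hn⟩ := exists_nat_gt (1/t)
    refine (hmem n).2.2.2 t ?_
    have h1 : (0:ℝ) < n + 1 := by positivity
    rw [div_le_iff₀ h1]
    rw [div_lt_iff₀ ht] at hn
    nlinarith
  have huv : 2 ≤ ‖u + v‖ := by
    by_contra h
    push_neg at h
    obtain ⟨n, hn⟩ := exists_nat_gt (1/(2 - ‖u + v‖))
    have h2 : (0:ℝ) < 2 - ‖u + v‖ := by linarith
    have := (hmem n).2.2.1
    have hnn : (0:ℝ) < n + 1 := by positivity
    have : 1/(n+1:ℝ) < 2 - ‖u + v‖ := by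
      rw [div_lt_iff₀ hnn]
      rw [div_lt_iff₀ h2] at hn
      nlinarith
    linarith [(hmem n).2.2.1]
  have hune : u ≠ 0 := by
    intro h; rw [h, norm_zero] at hu; exact one_ne_zero hu.symm
  have hd := (hsmooth u hune).hasFDerivAt
  set φ := fderiv ℝ (fun z : E => ‖z‖) u with hφ
  have hderiv : ∀ w : E, HasDerivAt (fun t : ℝ => ‖u + t • w‖) (φ w) 0 := by
    intro w
    have h1 : HasDerivAt (fun t : ℝ => u + t • w) w 0 := by
      simpa using ((hasDerivAt_id (0:ℝ)).smul_const w).const_add u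
    have h0 : u + (0:ℝ) • w = u := by simp
    have hd' : HasFDerivAt (fun z : E => ‖z‖) φ (u + (0:ℝ) • w) := by rw [h0]; exact hd
    exact hd'.comp_hasDerivAt 0 h1
  have slope_tendsto : ∀ w : E,
      Tendsto (fun t : ℝ => (‖u + t • w‖ - 1) / t) (𝓝[>] 0) (𝓝 (φ w)) := by
    intro w
    have h := hasDerivAt_iff_tendsto_slope.1 (hderiv w)
    have h' := h.mono_left (nhdsWithin_mono 0 (fun x hx => ne_of_gt hx))
    refine h'.congr' ?_
    filter_upwards [self_mem_nhdsWithin] with t ht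
    simp [slope_def_field, hu]
  have hφv : 1 ≤ φ v := by
    refine ge_of_tendsto (slope_tendsto v) ?_
    filter_upwards [Ioo_mem_nhdsGT_of_mem (Set.left_mem_Ico.2 one_pos)] with t ht
    have h1 : ‖u + v‖ ≤ ‖u + t • v‖ + (1 - t) * ‖v‖ := by
      have : u + v = (u + t • v) + (1 - t) • v := by module
      rw [this]
      calc ‖(u + t • v) + (1 - t) • v‖ ≤ ‖u + t • v‖ + ‖(1 - t) • v‖ := norm_add_le _ _
        _ = ‖u + t • v‖ + |1 - t| * ‖v‖ := by rw [norm_smul]; rfl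
        _ = ‖u + t • v‖ + (1 - t) * ‖v‖ := by rw [abs_of_nonneg (by linarith [ht.2])]
    rw [hv, mul_one] at h1
    rw [le_div_iff₀ ht.1]
    linarith
  have hφnv : 0 ≤ φ (-v) := by
    refine ge_of_tendsto (slope_tendsto (-v)) ?_
    filter_upwards [self_mem_nhdsWithin] with t ht
    have ht' : (0:ℝ) < t := ht
    have : u + t • (-v) = u - t • v := by module
    rw [this]
    have := hall t ht'
    exact div_nonneg (by linarith) ht'.le
  rw [map_neg] at hφnv
  linarith
end

section
/- For every α with 0 < α < 1 and every δ with 0 < δ small enough, the function ‖(x,y)‖ := δ·√(α²x² + y²) + (1 − αδ)|x| + (1 − δ)|y| is a rotund norm on ℝ², and it satisfies ‖v‖ ≤ ‖v‖₁ for all v ∈ ℝ² (in particular ‖(1,0)‖ = ‖(0,1)‖ = 1). -/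
/-!
The Euclidean-type summand is `‖T v‖` for the injective linear map `T v = δ (α v.1 + i v.2)`
into the strictly convex space `ℂ`, and the remaining summand is a seminorm `p`. If two unit
vectors `u ≠ v` had a midpoint of norm `1`, the triangle inequality for `u + v` would be an
equality for both summands; for `‖T ·‖` this puts `T u` and `T v`, hence `u` and `v`, on one ray,
and two vectors on one ray with the same nonzero norm coincide. Domination by the ℓ¹ norm is
`‖z‖ ≤ |re z| + |im z|` on `ℂ`.
-/

/-- The "inflated ℓ¹" function on the plane with parameters `α`, `δ`. -/
noncomputable def inflatedL1 (α δ : ℝ) (v : ℝ × ℝ) : ℝ :=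
  δ * Real.sqrt (α ^ 2 * v.1 ^ 2 + v.2 ^ 2) + (1 - α * δ) * |v.1| + (1 - δ) * |v.2|

open Function

theorem Seminorm.eq_of_sameRay_of_apply_eq {E : Type*} [AddCommGroup E] [Module ℝ E]
    (q : Seminorm ℝ E) {u v : E} (h : SameRay ℝ u v) (huv : q u = q v) (hu : q u ≠ 0) :
    u = v := by
  obtain ⟨r, hr, rfl⟩ := h.exists_nonneg_left (by rintro rfl; exact hu (map_zero q))
  have : r * q u = 1 * q u := by
    rw [one_mul, ← Real.norm_of_nonneg hr, ← map_smul_eq_mul, huv]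
  rw [mul_right_cancel₀ hu this, one_smul]

section NormComp

variable {E F : Type*} [AddCommGroup E] [Module ℝ E] [NormedAddCommGroup F] [NormedSpace ℝ F]
  {T : E →ₗ[ℝ] F}

theorem eq_zero_of_normSeminorm_comp_add_eq_zero (hT : Injective T) (p : Seminorm ℝ E) {v : E}
    (hv : ((normSeminorm ℝ F).comp T + p) v = 0) : v = 0 := by
  rw [add_apply, Seminorm.comp_apply, coe_normSeminorm] at hv
  have hTv : ‖T v‖ = 0 := le_antisymm (by linarith [apply_nonneg p v]) (norm_nonneg _)
  exact hT (by rw [norm_eq_zero.mp hTv, map_zero])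

variable [StrictConvexSpace ℝ F]

theorem sameRay_of_normSeminorm_comp_add_map_add_eq (hT : Injective T) (p : Seminorm ℝ E)
    {u v : E} (h : ((normSeminorm ℝ F).comp T + p) (u + v) =
      ((normSeminorm ℝ F).comp T + p) u + ((normSeminorm ℝ F).comp T + p) v) :
    SameRay ℝ u v := by
  simp only [add_apply, Seminorm.comp_apply, coe_normSeminorm, map_add] at h
  have hT_add : ‖T u + T v‖ = ‖T u‖ + ‖T v‖ :=
    le_antisymm (norm_add_le _ _) (by linarith [map_add_le_add p u v])
  exact hT.sameRay_map_iff.mp (sameRay_iff_norm_add.mpr hT_add)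

theorem normSeminorm_comp_add_midpoint_lt_one (hT : Injective T) (p : Seminorm ℝ E) {u v : E}
    (hu : ((normSeminorm ℝ F).comp T + p) u = 1) (hv : ((normSeminorm ℝ F).comp T + p) v = 1)
    (huv : u ≠ v) : ((normSeminorm ℝ F).comp T + p) ((1 / 2 : ℝ) • (u + v)) < 1 := by
  set q := (normSeminorm ℝ F).comp T + p
  have hmid : q ((1 / 2 : ℝ) • (u + v)) = q (u + v) / 2 := by
    rw [map_smul_eq_mul, Real.norm_of_nonneg (by norm_num)]; ring
  have hle : q (u + v) ≤ 2 := by linarith [map_add_le_add q u v]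
  refine hmid ▸ (div_lt_one two_pos).mpr (hle.lt_of_ne fun h2 => huv ?_)
  exact q.eq_of_sameRay_of_apply_eq
    (sameRay_of_normSeminorm_comp_add_map_add_eq hT p (by rw [h2, hu, hv]; norm_num))
    (hu.trans hv.symm) (by rw [hu]; exact one_ne_zero)

end NormComp

def ellipseMap (α : ℝ) : ℝ × ℝ →ₗ[ℝ] ℂ where
  toFun v := ⟨α * v.1, v.2⟩
  map_add' u v := by
    apply Complex.ext <;> simp only [Prod.fst_add, Prod.snd_add, Complex.add_re, Complex.add_im]
    ring
  map_smul' c v := by apply Complex.ext <;> simp; ring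

@[simp]
theorem ellipseMap_re (α : ℝ) (v : ℝ × ℝ) : (ellipseMap α v).re = α * v.1 := rfl

@[simp]
theorem ellipseMap_im (α : ℝ) (v : ℝ × ℝ) : (ellipseMap α v).im = v.2 := rfl

theorem norm_ellipseMap (α : ℝ) (v : ℝ × ℝ) :
    ‖ellipseMap α v‖ = Real.sqrt (α ^ 2 * v.1 ^ 2 + v.2 ^ 2) := by
  rw [Complex.norm_def, Complex.normSq_apply, ellipseMap_re, ellipseMap_im]
  ring_nf

theorem ellipseMap_injective {α : ℝ} (hα : α ≠ 0) : Injective (ellipseMap α) := by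
  intro u v h
  have h1 := congrArg Complex.re h
  have h2 := congrArg Complex.im h
  simp only [ellipseMap_re, ellipseMap_im, mul_right_inj' hα] at h1 h2
  exact Prod.ext h1 h2

theorem inflatedL1_le_abs_add_abs {α δ : ℝ} (hα : 0 ≤ α) (hδ : 0 ≤ δ) (v : ℝ × ℝ) :
    inflatedL1 α δ v ≤ |v.1| + |v.2| := by
  have h := Complex.norm_le_abs_re_add_abs_im (ellipseMap α v)
  rw [norm_ellipseMap, ellipseMap_re, ellipseMap_im, abs_mul, abs_of_nonneg hα] at h
  unfold inflatedL1
  nlinarith [mul_le_mul_of_nonneg_left h hδ]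

noncomputable def weightedL1Seminorm (a b : ℝ) : Seminorm ℝ (ℝ × ℝ) :=
  (normSeminorm ℝ ℝ).comp (a • LinearMap.fst ℝ ℝ ℝ) +
    (normSeminorm ℝ ℝ).comp (b • LinearMap.snd ℝ ℝ ℝ)

theorem weightedL1Seminorm_apply (a b : ℝ) (v : ℝ × ℝ) :
    weightedL1Seminorm a b v = |a| * |v.1| + |b| * |v.2| := by
  simp [weightedL1Seminorm]

theorem inflatedL1_eq_seminorm {α δ : ℝ} (hδ : 0 ≤ δ) (hαδ : α * δ ≤ 1) (hδ1 : δ ≤ 1) :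
    inflatedL1 α δ =
      ⇑((normSeminorm ℝ ℂ).comp (δ • ellipseMap α) + weightedL1Seminorm (1 - α * δ) (1 - δ)) := by
  ext v
  rw [inflatedL1, add_apply, weightedL1Seminorm_apply, Seminorm.comp_apply, coe_normSeminorm,
    LinearMap.smul_apply, norm_smul, norm_ellipseMap, Real.norm_of_nonneg hδ,
    abs_of_nonneg (sub_nonneg.mpr hαδ), abs_of_nonneg (sub_nonneg.mpr hδ1), add_assoc]

/-- For `0 < α < 1` and all sufficiently small `δ > 0`, `inflatedL1 α δ` is a rotund
norm on `ℝ²` dominated by the ℓ¹ norm. -/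
theorem inflatedL1_rotund_norm :
    ∀ α : ℝ, 0 < α → α < 1 → ∃ δ₀ : ℝ, 0 < δ₀ ∧ ∀ δ : ℝ, 0 < δ → δ < δ₀ →
      (∀ v : ℝ × ℝ, 0 ≤ inflatedL1 α δ v) ∧
      (∀ v : ℝ × ℝ, inflatedL1 α δ v = 0 → v = 0) ∧
      (∀ (c : ℝ) (v : ℝ × ℝ), inflatedL1 α δ (c • v) = |c| * inflatedL1 α δ v) ∧
      (∀ u v : ℝ × ℝ, inflatedL1 α δ (u + v) ≤ inflatedL1 α δ u + inflatedL1 α δ v) ∧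
      (∀ u v : ℝ × ℝ, inflatedL1 α δ u = 1 → inflatedL1 α δ v = 1 → u ≠ v →
        inflatedL1 α δ ((1 / 2 : ℝ) • (u + v)) < 1) ∧
      (∀ v : ℝ × ℝ, inflatedL1 α δ v ≤ |v.1| + |v.2|) := by
  intro α hα0 hα1
  refine ⟨1, one_pos, fun δ hδ0 hδ1 => ?_⟩
  have hT : Injective (δ • ellipseMap α) :=
    fun u v h => ellipseMap_injective hα0.ne' (smul_right_injective ℂ hδ0.ne' h)
  have hq := inflatedL1_eq_seminorm (α := α) hδ0.le (by nlinarith) hδ1.le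
  refine ⟨?_, ?_, ?_, ?_, ?_, inflatedL1_le_abs_add_abs hα0.le hδ0.le⟩ <;> rw [hq]
  · exact apply_nonneg _
  · exact fun v => eq_zero_of_normSeminorm_comp_add_eq_zero hT _
  · exact fun c v => by rw [map_smul_eq_mul, Real.norm_eq_abs]
  · exact map_add_le_add _
  · exact fun u v => normSeminorm_comp_add_midpoint_lt_one hT _
end
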